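/- Every simply typed term of the calculus λ¢ is strongly normalizing: there is no infinite reduction sequence starting from a well-typed term, where a reduction step is any single-redex step (including a coin toss to either 0 or 1). -/

import Mathlib

/-- Terms of λ¢ (de Bruijn): variables, abstraction, application,
    booleans `one`/`zero`, if-then-else, and a coin. -/
inductive Tm : Type
  | var : Nat → Tm
  | lam : Tm → Tm
  | app : Tm → Tm → Tm
  | one : Tm
  | zero : Tm
  | ite : Tm → Tm → Tm → Tm
  | coin : Tm
  deriving DecidableEq

/-- Lifting of de Bruijn indices (indices ≥ d are incremented). -/
def lift (d : Nat) : Tm → Tm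
  | .var n => if n < d then .var n else .var (n+1)
  | .lam t => .lam (lift (d+1) t)
  | .app t u => .app (lift d t) (lift d u)
  | .one => .one
  | .zero => .zero
  | .ite c a b => .ite (lift d c) (lift d a) (lift d b)
  | .coin => .coin

/-- Capture-avoiding substitution `t[s/k]` (de Bruijn). -/
def subst : Tm → Nat → Tm → Tm
  | .var n, k, s => if n = k then s else if k < n then .var (n-1) else .var n
  | .lam t, k, s => .lam (subst t (k+1) (lift 0 s))
  | .app t u, k, s => .app (subst t k s) (subst u k s)
  | .one, _, _ => .one
  | .zero, _, _ => .zero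
  | .ite c a b, k, s => .ite (subst c k s) (subst a k s) (subst b k s)
  | .coin, _, _ => .coin

/-- One-step probabilistic reduction `t →_p r` of λ¢:
    β, if-rules (probability 1), coin toss (probability 1/2 each),
    closed under all contexts. -/
inductive Step : Tm → ℚ → Tm → Prop
  | beta (t r) : Step (.app (.lam t) r) 1 (subst t 0 r)
  | iteOne (a b) : Step (.ite .one a b) 1 a
  | iteZero (a b) : Step (.ite .zero a b) 1 b
  | coinOne : Step .coin (1/2) .one
  | coinZero : Step .coin (1/2) .zero
  | lam {t p t'} : Step t p t' → Step (.lam t) p (.lam t')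
  | appL {t p t'} (u) : Step t p t' → Step (.app t u) p (.app t' u)
  | appR {u p u'} (t) : Step u p u' → Step (.app t u) p (.app t u')
  | iteC {c p c'} (a b) : Step c p c' → Step (.ite c a b) p (.ite c' a b)
  | iteA {a p a'} (c b) : Step a p a' → Step (.ite c a b) p (.ite c a' b)
  | iteB {b p b'} (c a) : Step b p b' → Step (.ite c a b) p (.ite c a b')

/-- A term is normal if no probabilistic step applies. -/
def NormalTm (t : Tm) : Prop := ¬ ∃ p r, Step t p r

/-- (Sub)probability distributions over terms, as finitely supported maps. -/
abbrev PDist := Tm →₀ ℚ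

/-- Contraction of one redex occurrence of a term, producing the
    distribution of its results: deterministic rules give a Dirac
    distribution, a coin redex splits 1/2–1/2; closed under contexts. -/
inductive TStep : Tm → PDist → Prop
  | beta (t r) : TStep (.app (.lam t) r) (Finsupp.single (subst t 0 r) 1)
  | iteOne (a b) : TStep (.ite .one a b) (Finsupp.single a 1)
  | iteZero (a b) : TStep (.ite .zero a b) (Finsupp.single b 1)
  | coin : TStep .coin (Finsupp.single Tm.one (1/2) + Finsupp.single Tm.zero (1/2))
  | lam {t D} : TStep t D → TStep (.lam t) (D.mapDomain .lam)
  | appL {t D} (u) : TStep t D → TStep (.app t u) (D.mapDomain (fun s => .app s u))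
  | appR {u D} (t) : TStep u D → TStep (.app t u) (D.mapDomain (fun s => .app t s))
  | iteC {c D} (a b) : TStep c D → TStep (.ite c a b) (D.mapDomain (fun s => .ite s a b))
  | iteA {a D} (c b) : TStep a D → TStep (.ite c a b) (D.mapDomain (fun s => .ite c s b))
  | iteB {b D} (c a) : TStep b D → TStep (.ite c a b) (D.mapDomain (fun s => .ite c a s))

/-- One distribution-reduction step: pick a term `t` in the support,
    contract one redex occurrence of `t` and redistribute its probability
    mass accordingly (equal results are merged by the `Finsupp` addition). -/
def DStep (D D' : PDist) : Prop :=
  ∃ t E, D t ≠ 0 ∧ TStep t E ∧ D' = D.erase t + D t • E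

/-- Multistep distribution reduction. -/
def DSteps : PDist → PDist → Prop := Relation.ReflTransGen DStep

/-- A distribution is normal when every term in its support is normal. -/
def NormalDist (D : PDist) : Prop := ∀ t ∈ D.support, NormalTm t

/-- Simple types: booleans and arrows. -/
inductive Ty : Type
  | bool : Ty
  | arrow : Ty → Ty → Ty
  deriving DecidableEq

/-- Simply typed λ¢ (unrestricted type system, Table 2). -/
inductive HasTy : List Ty → Tm → Ty → Prop
  | var {Γ n A} : Γ[n]? = some A → HasTy Γ (.var n) A
  | lam {Γ t A B} : HasTy (A :: Γ) t B → HasTy Γ (.lam t) (.arrow A B)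
  | app {Γ t u A B} : HasTy Γ t (.arrow A B) → HasTy Γ u A → HasTy Γ (.app t u) B
  | one {Γ} : HasTy Γ .one .bool
  | zero {Γ} : HasTy Γ .zero .bool
  | coin {Γ} : HasTy Γ .coin .bool
  | ite {Γ c a b A} : HasTy Γ c .bool → HasTy Γ a A → HasTy Γ b A →
      HasTy Γ (.ite c a b) A

/-! Tait–Girard reducibility: at `𝔹` the reducible terms are the strongly normalizing ones, at
`A → B` the strongly normalizing terms sending reducible arguments to reducible applications.
Reducibility is closed under reduction, and a term that is not an abstraction is reducible once
all its one-step reducts are; this covers `if` and the coin, whose reducts `0` and `1` are normal.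
Every well-typed term is reducible under each reducible simultaneous substitution, in particular
under the identity. -/

namespace Tm

def upRen (ρ : ℕ → ℕ) : ℕ → ℕ
  | 0 => 0
  | n + 1 => ρ n + 1

def rename (ρ : ℕ → ℕ) : Tm → Tm
  | .var n => .var (ρ n)
  | .lam t => .lam (rename (upRen ρ) t)
  | .app t u => .app (rename ρ t) (rename ρ u)
  | .one => .one
  | .zero => .zero
  | .ite c a b => .ite (rename ρ c) (rename ρ a) (rename ρ b)
  | .coin => .coin

def scons (u : Tm) (σ : ℕ → Tm) : ℕ → Tm
  | 0 => u
  | n + 1 => σ n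

def upSubst (σ : ℕ → Tm) : ℕ → Tm :=
  scons (.var 0) (rename Nat.succ ∘ σ)

def psubst (σ : ℕ → Tm) : Tm → Tm
  | .var n => σ n
  | .lam t => .lam (psubst (upSubst σ) t)
  | .app t u => .app (psubst σ t) (psubst σ u)
  | .one => .one
  | .zero => .zero
  | .ite c a b => .ite (psubst σ c) (psubst σ a) (psubst σ b)
  | .coin => .coin

theorem rename_rename (ρ' ρ : ℕ → ℕ) (t : Tm) :
    rename ρ' (rename ρ t) = rename (ρ' ∘ ρ) t := by
  induction t generalizing ρ' ρ with
  | lam t ih =>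
    have : upRen ρ' ∘ upRen ρ = upRen (ρ' ∘ ρ) := by funext n; cases n <;> rfl
    simp only [rename, ih, this]
  | _ => simp_all [rename]

theorem psubst_rename (σ : ℕ → Tm) (ρ : ℕ → ℕ) (t : Tm) :
    psubst σ (rename ρ t) = psubst (σ ∘ ρ) t := by
  induction t generalizing σ ρ with
  | lam t ih =>
    have : upSubst σ ∘ upRen ρ = upSubst (σ ∘ ρ) := by funext n; cases n <;> rfl
    simp only [rename, psubst, ih, this]
  | _ => simp_all [rename, psubst]

theorem rename_psubst (ρ : ℕ → ℕ) (σ : ℕ → Tm) (t : Tm) :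
    rename ρ (psubst σ t) = psubst (rename ρ ∘ σ) t := by
  induction t generalizing ρ σ with
  | lam t ih =>
    have : rename (upRen ρ) ∘ upSubst σ = upSubst (rename ρ ∘ σ) := by
      funext n
      cases n with
      | zero => rfl
      | succ n => simp only [upSubst, scons, Function.comp, rename_rename]; rfl
    simp only [rename, psubst, ih, this]
  | _ => simp_all [rename, psubst]

theorem psubst_psubst (σ' σ : ℕ → Tm) (t : Tm) :
    psubst σ' (psubst σ t) = psubst (psubst σ' ∘ σ) t := by
  induction t generalizing σ' σ with
  | lam t ih =>
    have : psubst (upSubst σ') ∘ upSubst σ = upSubst (psubst σ' ∘ σ) := by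
      funext n
      cases n with
      | zero => rfl
      | succ n => simp only [upSubst, scons, Function.comp, psubst_rename, rename_psubst]; rfl
    simp only [psubst, ih, this]
  | _ => simp_all [psubst]

theorem psubst_var (t : Tm) : psubst .var t = t := by
  induction t with
  | lam t ih =>
    have : upSubst .var = .var := by funext n; cases n <;> rfl
    simp only [psubst, this, ih]
  | _ => simp_all [psubst]

theorem lift_eq_rename (d : ℕ) (t : Tm) :
    lift d t = rename (fun n => if n < d then n else n + 1) t := by
  induction t generalizing d with
  | var n => simp only [lift, rename]; split <;> rfl
  | lam t ih =>
    have : upRen (fun n => if n < d then n else n + 1) =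
        fun n => if n < d + 1 then n else n + 1 := by
      funext n; cases n <;> simp [upRen, apply_ite (· + 1)]
    simp only [lift, rename, ih, this]
  | _ => simp_all [lift, rename]

def substAt (k : ℕ) (s : Tm) (n : ℕ) : Tm :=
  if n = k then s else if k < n then .var (n - 1) else .var n

theorem upSubst_substAt (k : ℕ) (s : Tm) :
    upSubst (substAt k s) = substAt (k + 1) (lift 0 s) := by
  funext n
  cases n with
  | zero => simp [upSubst, scons, substAt]
  | succ n =>
    have hlift : lift 0 s = rename Nat.succ s := by
      rw [lift_eq_rename]; simp
    simp only [upSubst, scons, Function.comp, substAt, hlift]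
    split_ifs <;> first | rfl | omega | simp only [rename]; congr 1; omega

theorem subst_eq_psubst (t : Tm) (k : ℕ) (s : Tm) : subst t k s = psubst (substAt k s) t := by
  induction t generalizing k s with
  | var n => rfl
  | lam t ih => simp only [subst, psubst, ih, upSubst_substAt]
  | _ => simp_all [subst, psubst]

theorem subst_zero_eq_psubst (t s : Tm) : subst t 0 s = psubst (scons s .var) t := by
  have : substAt 0 s = scons s .var := by funext n; cases n <;> simp [substAt, scons]
  rw [subst_eq_psubst, this]

theorem subst_psubst_upSubst (σ : ℕ → Tm) (t u : Tm) :
    subst (psubst (upSubst σ) t) 0 u = psubst (scons u σ) t := by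
  rw [subst_zero_eq_psubst, psubst_psubst]
  congr 1
  funext n
  cases n with
  | zero => rfl
  | succ n => simp only [Function.comp, upSubst, scons, psubst_rename]; exact psubst_var (σ n)

theorem psubst_subst (σ : ℕ → Tm) (t u : Tm) :
    psubst σ (subst t 0 u) = psubst (scons (psubst σ u) σ) t := by
  rw [subst_zero_eq_psubst, psubst_psubst]
  congr 1
  funext n
  cases n <;> rfl

end Tm

open Tm

theorem Step.psubst {t t' : Tm} {p : ℚ} (h : Step t p t') (σ : ℕ → Tm) :
    Step (psubst σ t) p (psubst σ t') := by
  induction h generalizing σ with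
  | beta t r =>
    rw [psubst_subst, ← subst_psubst_upSubst]
    exact .beta _ _
  | iteOne => exact .iteOne _ _
  | iteZero => exact .iteZero _ _
  | coinOne => exact .coinOne
  | coinZero => exact .coinZero
  | lam _ ih => exact .lam (ih _)
  | appL _ _ ih => exact .appL _ (ih σ)
  | appR _ _ ih => exact .appR _ (ih σ)
  | iteC _ _ _ ih => exact .iteC _ _ (ih σ)
  | iteA _ _ _ ih => exact .iteA _ _ (ih σ)
  | iteB _ _ _ ih => exact .iteB _ _ (ih σ)

theorem Step.subst {t t' : Tm} {p : ℚ} (h : Step t p t') (u : Tm) :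
    Step (subst t 0 u) p (subst t' 0 u) := by
  simpa only [subst_zero_eq_psubst] using h.psubst (scons u .var)

def Reduces (t t' : Tm) : Prop := ∃ p, Step t p t'

def SN (t : Tm) : Prop := Acc (fun s t => Reduces t s) t

theorem SN.of_map {f : Tm → Tm} (hf : ∀ {s s'}, Reduces s s' → Reduces (f s) (f s')) {t : Tm}
    (h : SN (f t)) : SN t :=
  Subrelation.accessible hf (InvImage.accessible f h)

theorem SN.of_normalTm {t : Tm} (h : NormalTm t) : SN t :=
  Acc.intro t fun s ⟨p, hs⟩ => absurd ⟨p, s, hs⟩ h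

theorem normalTm_var (n : ℕ) : NormalTm (.var n) := by rintro ⟨_, _, ⟨⟩⟩
theorem normalTm_one : NormalTm .one := by rintro ⟨_, _, ⟨⟩⟩
theorem normalTm_zero : NormalTm .zero := by rintro ⟨_, _, ⟨⟩⟩

theorem SN.coin : SN .coin :=
  Acc.intro _ fun s ⟨_, hs⟩ => by
    cases hs with
    | coinOne => exact SN.of_normalTm normalTm_one
    | coinZero => exact SN.of_normalTm normalTm_zero

theorem SN.lam {t : Tm} (h : SN t) : SN (.lam t) := by
  induction h with
  | intro t _ ih =>
    refine Acc.intro _ fun s ⟨p, hs⟩ => ?_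
    cases hs with
    | lam hs => exact ih _ ⟨p, hs⟩

theorem SN.not_infinite_chain {t : Tm} (h : SN t) :
    ¬ ∃ f : ℕ → Tm, f 0 = t ∧ ∀ n, Reduces (f n) (f (n + 1)) := by
  induction h with
  | intro t _ ih =>
    rintro ⟨f, rfl, hf⟩
    exact ih (f 1) (hf 0) ⟨fun n => f (n + 1), rfl, fun n => hf (n + 1)⟩

def Reducible : Ty → Tm → Prop
  | .bool, t => SN t
  | .arrow A B, t => SN t ∧ ∀ u, Reducible A u → Reducible B (.app t u)

def Neutral (t : Tm) : Prop := ∀ s, t ≠ .lam s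

theorem Reducible.sn {A : Ty} {t : Tm} (h : Reducible A t) : SN t := by
  cases A with
  | bool => exact h
  | arrow => exact h.1

theorem Reducible.inv {A : Ty} {t t' : Tm} (h : Reducible A t) (ht : Reduces t t') :
    Reducible A t' := by
  induction A generalizing t t' with
  | bool => exact Acc.inv h ht
  | arrow A B _ ihB =>
    obtain ⟨p, ht⟩ := ht
    exact ⟨Acc.inv h.1 ⟨p, ht⟩, fun u hu => ihB (h.2 u hu) ⟨p, .appL u ht⟩⟩

theorem reducible_of_neutral {A : Ty} {t : Tm} (hn : Neutral t)
    (h : ∀ t', Reduces t t' → Reducible A t') : Reducible A t := by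
  induction A generalizing t with
  | bool => exact Acc.intro t h
  | arrow A B _ ihB =>
    refine ⟨Acc.intro t fun s hs => (h s hs).sn, fun u hu => ?_⟩
    induction hu.sn with
    | intro u _ ihu =>
      refine ihB (fun _ => nofun) fun s ⟨p, hs⟩ => ?_
      cases hs with
      | beta t₀ => exact absurd rfl (hn t₀)
      | appL _ hs => exact (h _ ⟨p, hs⟩).2 u hu
      | appR _ hs => exact ihu _ ⟨p, hs⟩ (hu.inv ⟨p, hs⟩)

theorem reducible_var (A : Ty) (n : ℕ) : Reducible A (.var n) :=
  reducible_of_neutral (fun _ => nofun) fun _ ⟨_, hs⟩ => absurd ⟨_, _, hs⟩ (normalTm_var n)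

theorem reducible_lam {A B : Ty} {t : Tm}
    (h : ∀ u, Reducible A u → Reducible B (subst t 0 u)) : Reducible (.arrow A B) (.lam t) := by
  -- the variable `0` is reducible, and `subst · 0 (.var 0)` maps reduction steps to steps
  have ht : SN t := SN.of_map (fun ⟨p, hs⟩ => ⟨p, hs.subst _⟩) (h _ (reducible_var A 0)).sn
  refine ⟨ht.lam, fun u hu => ?_⟩
  induction ht generalizing u with
  | intro t _ iht =>
    induction hu.sn with
    | intro u _ ihu =>
      refine reducible_of_neutral (fun _ => nofun) fun s ⟨p, hs⟩ => ?_
      cases hs with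
      | beta => exact h u hu
      | appL _ hs =>
        cases hs with
        | lam hs => exact iht _ ⟨p, hs⟩ (fun v hv => (h v hv).inv ⟨p, hs.subst v⟩) u hu
      | appR _ hs => exact ihu _ ⟨p, hs⟩ (hu.inv ⟨p, hs⟩)

theorem reducible_ite {A : Ty} {c a b : Tm} (hc : SN c) (ha : Reducible A a)
    (hb : Reducible A b) : Reducible A (.ite c a b) := by
  induction hc generalizing a b with
  | intro c _ ihc =>
    induction ha.sn generalizing b with
    | intro a _ iha =>
      induction hb.sn with
      | intro b _ ihb =>
        refine reducible_of_neutral (fun _ => nofun) fun s ⟨p, hs⟩ => ?_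
        cases hs with
        | iteOne => exact ha
        | iteZero => exact hb
        | iteC _ _ hs => exact ihc _ ⟨p, hs⟩ ha hb
        | iteA _ _ hs => exact iha _ ⟨p, hs⟩ (ha.inv ⟨p, hs⟩) hb
        | iteB _ _ hs => exact ihb _ ⟨p, hs⟩ (hb.inv ⟨p, hs⟩)

def ReducibleSubst (Γ : List Ty) (σ : ℕ → Tm) : Prop :=
  ∀ n A, Γ[n]? = some A → Reducible A (σ n)

theorem reducibleSubst_var (Γ : List Ty) : ReducibleSubst Γ .var :=
  fun n A _ => reducible_var A n

theorem ReducibleSubst.cons {Γ : List Ty} {σ : ℕ → Tm} {A : Ty} {u : Tm}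
    (hσ : ReducibleSubst Γ σ) (hu : Reducible A u) : ReducibleSubst (A :: Γ) (scons u σ) := by
  rintro (_ | n) B hB
  · cases hB; exact hu
  · exact hσ n B hB

theorem HasTy.reducible_psubst {Γ : List Ty} {t : Tm} {A : Ty} (h : HasTy Γ t A) {σ : ℕ → Tm}
    (hσ : ReducibleSubst Γ σ) : Reducible A (psubst σ t) := by
  induction h generalizing σ with
  | var hΓ => exact hσ _ _ hΓ
  | lam _ ih => exact reducible_lam fun u hu => by rw [subst_psubst_upSubst]; exact ih (hσ.cons hu)
  | app _ _ iht ihu => exact (iht hσ).2 _ (ihu hσ)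
  | one => exact SN.of_normalTm normalTm_one
  | zero => exact SN.of_normalTm normalTm_zero
  | coin => exact SN.coin
  | ite _ _ _ ihc iha ihb => exact reducible_ite (ihc hσ) (iha hσ) (ihb hσ)

theorem strong_normalization {Γ : List Ty} {t : Tm} {A : Ty} (h : HasTy Γ t A) :
    ¬ ∃ f : Nat → Tm, f 0 = t ∧ ∀ n, ∃ p, Step (f n) p (f (n+1)) := by
  have hsn : SN (psubst .var t) := (h.reducible_psubst (reducibleSubst_var Γ)).sn
  rw [psubst_var] at hsn
  exact hsn.not_infinite_chain
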